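/- Let m₁ ≥ 1 and m₂ ≥ 0 be integers, ρ = m₁/2 + m₂, and assume either (m₂ = 0 and m₁ is odd), in which case set j = 1, or (m₁ is even and m₂ is odd), in which case set j = 2. Then: (a) for every λ₀ ∈ ℂ, the function c tends to 0 as λ → λ₀ along the punctured neighbourhood filter 𝓝[≠] λ₀ if and only if there exists k ∈ ℕ (k ≥ 0) with λ₀ = −(ρ + j·k); (b) at each such λ₀ = −(ρ + j·k) there exists a nonzero L ∈ ℂ such that c(λ)/(λ − λ₀) tends to L along 𝓝[≠] λ₀, i.e. the zero is simple. -/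

import Mathlib

/-!
Write `c(λ) = C · 2^{-λ} Γ(λ) / (Γ(a(λ)) Γ(b(λ)))` with `a(λ) = (m₁/2 + 1 + λ)/2`,
`b(λ) = (ρ + λ)/2` and `C ≠ 0` because `ρ > 0`. Since `Γ` has no zeros and has simple
poles exactly at `0, -1, -2, …`, the order of `c` at `λ` is the number of poles of `Γ` among
`a(λ)`, `b(λ)`, minus one if `λ` itself is a pole; `c` tends to `0` iff this order is positive.

If `m₂ = 0` and `m₁` is odd, `ρ` is a half-integer: the poles of `Γ ∘ a` and `Γ ∘ b`
interlace to give simple zeros at `-(ρ + k)`, none of which is a pole of `Γ`. If `m₁` is even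
and `m₂` is odd, then at `-(ρ + 2k)` all three arguments are poles (order `1 + 1 - 1`), while
elsewhere `b(λ)` is never a pole and every pole of `Γ ∘ a` is a nonpositive integer, where the
pole of `Γ` cancels it.
-/

open Set Filter Topology

noncomputable section

/-- `ρ = m₁/2 + m₂`. -/
def rho (m₁ m₂ : ℕ) : ℝ := m₁ / 2 + m₂

/-- `g(μ) = Γ(μ)2^{−μ}/(Γ((m₁/2+1+μ)/2)Γ((m₁/2+m₂+μ)/2))`. -/
def gfun (m₁ m₂ : ℕ) (μ : ℂ) : ℂ :=
  Complex.Gamma μ * (2 : ℂ) ^ (-μ) /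
    (Complex.Gamma (((m₁ : ℂ) / 2 + 1 + μ) / 2) *
      Complex.Gamma (((m₁ : ℂ) / 2 + (m₂ : ℂ) + μ) / 2))

/-- The Harish-Chandra c-function, normalized so that `c(ρ) = 1`. -/
def cfun (m₁ m₂ : ℕ) (μ : ℂ) : ℂ := gfun m₁ m₂ μ / gfun m₁ m₂ ((rho m₁ m₂ : ℂ))

open Complex

theorem exists_tendsto_div_sub_of_meromorphicOrderAt_eq_one {𝕜 : Type*}
    [NontriviallyNormedField 𝕜] {f : 𝕜 → 𝕜} {x : 𝕜} (hf : MeromorphicAt f x)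
    (h : meromorphicOrderAt f x = 1) :
    ∃ L ≠ 0, Tendsto (fun z => f z / (z - x)) (𝓝[≠] x) (𝓝 L) := by
  refine tendsto_ne_zero_of_meromorphicOrderAt_eq_zero (by fun_prop) ?_
  rw [fun_meromorphicOrderAt_div hf (by fun_prop), h, meromorphicOrderAt_id_sub_const]
  rfl

@[fun_prop]
theorem meromorphicAt_Gamma (z : ℂ) : MeromorphicAt Gamma z := Meromorphic.Gamma z

open Classical in
def gammaPoleOrder (z : ℂ) : ℤ := if ∃ n : ℕ, z = -n then 1 else 0

theorem gammaPoleOrder_eq_one_of_eq_neg_natCast {z : ℂ} (n : ℕ) (h : z = -n) :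
    gammaPoleOrder z = 1 :=
  if_pos ⟨n, h⟩

theorem gammaPoleOrder_eq_zero_of_forall_ne {z : ℂ} (hz : ∀ n : ℕ, z ≠ -n) :
    gammaPoleOrder z = 0 :=
  if_neg fun ⟨n, hn⟩ => hz n hn

theorem gammaPoleOrder_eq_zero_of_eq_half_odd {z : ℂ} (n : ℤ) (h : z = (2 * n + 1) / 2) :
    gammaPoleOrder z = 0 := by
  refine gammaPoleOrder_eq_zero_of_forall_ne fun m hm => ?_
  have : ((2 * n + 1 : ℤ) : ℂ) = ((-(2 * m) : ℤ) : ℂ) := by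
    push_cast
    linear_combination 2 * h.symm.trans hm
  have := Int.cast_injective this
  omega

theorem gammaPoleOrder_le {w z : ℂ} (h : ∀ n : ℕ, w = -n → ∃ m : ℕ, z = -m) :
    gammaPoleOrder w ≤ gammaPoleOrder z := by
  unfold gammaPoleOrder
  split_ifs <;> grind

theorem meromorphicOrderAt_Gamma_of_forall_ne {z : ℂ} (hz : ∀ n : ℕ, z ≠ -n) :
    meromorphicOrderAt Gamma z = 0 :=
  (tendsto_ne_zero_iff_meromorphicOrderAt_eq_zero (meromorphicAt_Gamma z)).mp
    ⟨Gamma z, Gamma_ne_zero hz,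
      (differentiableAt_Gamma z hz).continuousAt.tendsto.mono_left nhdsWithin_le_nhds⟩

theorem meromorphicOrderAt_Gamma_neg_natCast (n : ℕ) :
    meromorphicOrderAt Gamma (-n) = -1 := by
  induction n with
  | zero =>
    have h : meromorphicOrderAt (fun z => id z * Gamma z) 0 = 0 :=
      (tendsto_ne_zero_iff_meromorphicOrderAt_eq_zero (by fun_prop)).mp
        ⟨1, one_ne_zero, tendsto_self_mul_Gamma_nhds_zero⟩
    rw [fun_meromorphicOrderAt_mul (by fun_prop) (by fun_prop), meromorphicOrderAt_id] at h
    simpa using eq_neg_of_add_eq_zero_right h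
  | succ n ih =>
    have hne : (-(n + 1 : ℕ) : ℂ) ≠ 0 := neg_ne_zero.mpr (Nat.cast_ne_zero.mpr n.succ_ne_zero)
    have hΓ : Gamma =ᶠ[𝓝[≠] (-(n + 1 : ℕ) : ℂ)] fun z => Gamma (z + 1) * z⁻¹ := by
      filter_upwards [(eventually_ne_nhds hne).filter_mono nhdsWithin_le_nhds] with z hz
      rw [Gamma_add_one z hz, mul_comm z, mul_inv_cancel_right₀ hz]
    have hinv : meromorphicOrderAt (fun z : ℂ => z⁻¹) (-(n + 1 : ℕ) : ℂ) = 0 := by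
      rw [AnalyticAt.meromorphicOrderAt_eq (by fun_prop (disch := exact hne)),
        analyticOrderAt_eq_zero.mpr (.inr (inv_ne_zero hne))]
      rfl
    rw [meromorphicOrderAt_congr hΓ, fun_meromorphicOrderAt_mul (by fun_prop) (by fun_prop), hinv,
      add_zero, meromorphicOrderAt_fun_comp_add_const_eq_meromorphicOrderAt]
    simpa using ih

theorem meromorphicOrderAt_Gamma (z : ℂ) : meromorphicOrderAt Gamma z = -gammaPoleOrder z := by
  by_cases hz : ∃ n : ℕ, z = -n
  · obtain ⟨n, rfl⟩ := hz
    rw [meromorphicOrderAt_Gamma_neg_natCast, gammaPoleOrder_eq_one_of_eq_neg_natCast n rfl]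
    rfl
  · push Not at hz
    rw [meromorphicOrderAt_Gamma_of_forall_ne hz, gammaPoleOrder_eq_zero_of_forall_ne hz]
    rfl

theorem meromorphicOrderAt_Gamma_add_div_two (c z : ℂ) :
    meromorphicOrderAt (fun w => Gamma ((c + w) / 2)) z = -gammaPoleOrder ((c + z) / 2) :=
  (meromorphicOrderAt_comp_of_deriv_ne_zero (f := Gamma) (by fun_prop) (by simp)).trans
    (meromorphicOrderAt_Gamma _)

theorem ofReal_rho (m₁ m₂ : ℕ) : (rho m₁ m₂ : ℂ) = m₁ / 2 + m₂ := by
  simp [rho]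

theorem gfun_ne_zero (m₁ m₂ : ℕ) {μ : ℂ} (hμ : 0 < μ.re) : gfun m₁ m₂ μ ≠ 0 := by
  have hre (c : ℝ) (hc : 0 ≤ c) : 0 < (((c : ℂ) + μ) / 2).re := by simp; linarith
  refine div_ne_zero (mul_ne_zero (Gamma_ne_zero_of_re_pos hμ) (by simp))
    (mul_ne_zero (Gamma_ne_zero_of_re_pos ?_) (Gamma_ne_zero_of_re_pos ?_))
  · simpa using hre (m₁ / 2 + 1) (by positivity)
  · simpa using hre (m₁ / 2 + m₂) (by positivity)

theorem cfun_eq_mul (m₁ m₂ : ℕ) :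
    cfun m₁ m₂ = (fun z : ℂ => (gfun m₁ m₂ (rho m₁ m₂))⁻¹ * (2 : ℂ) ^ (-z)) *
      fun z : ℂ => Gamma z * (Gamma (((m₁ : ℂ) / 2 + 1 + z) / 2))⁻¹ *
        (Gamma (((m₁ : ℂ) / 2 + m₂ + z) / 2))⁻¹ := by
  ext z
  rw [Pi.mul_apply, cfun, div_eq_inv_mul, gfun.eq_1 m₁ m₂ z]
  ring

theorem meromorphicAt_cfun (m₁ m₂ : ℕ) (z : ℂ) : MeromorphicAt (cfun m₁ m₂) z := by
  rw [cfun_eq_mul]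
  fun_prop (disch := simp)

def cfunOrder (m₁ m₂ : ℕ) (z : ℂ) : ℤ :=
  gammaPoleOrder (((m₁ : ℂ) / 2 + 1 + z) / 2) + gammaPoleOrder (((m₁ : ℂ) / 2 + m₂ + z) / 2) -
    gammaPoleOrder z

theorem meromorphicOrderAt_cfun (m₁ m₂ : ℕ) (hρ : gfun m₁ m₂ (rho m₁ m₂) ≠ 0) (z : ℂ) :
    meromorphicOrderAt (cfun m₁ m₂) z = cfunOrder m₁ m₂ z := by
  rw [cfun_eq_mul, meromorphicOrderAt_mul_of_ne_zero (by fun_prop (disch := simp)) (by simp [hρ]),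
    fun_meromorphicOrderAt_mul (by fun_prop) (by fun_prop),
    fun_meromorphicOrderAt_mul (by fun_prop) (by fun_prop), fun_meromorphicOrderAt_inv,
    fun_meromorphicOrderAt_inv, meromorphicOrderAt_Gamma, meromorphicOrderAt_Gamma_add_div_two,
    meromorphicOrderAt_Gamma_add_div_two, cfunOrder]
  norm_cast
  ring

theorem cfunOrder_neg_rho_sub {m₁ m₂ j : ℕ}
    (hcase : (m₂ = 0 ∧ Odd m₁ ∧ j = 1) ∨ (Even m₁ ∧ Odd m₂ ∧ j = 2)) (k : ℕ) :
    cfunOrder m₁ m₂ (-(rho m₁ m₂ + j * k)) = 1 := by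
  rcases hcase with ⟨rfl, ⟨t, rfl⟩, rfl⟩ | ⟨⟨n, rfl⟩, ⟨t, rfl⟩, rfl⟩
  · obtain ⟨M, rfl | rfl⟩ := Nat.even_or_odd' k
    · rw [cfunOrder, gammaPoleOrder_eq_zero_of_eq_half_odd (-M) ?_,
        gammaPoleOrder_eq_one_of_eq_neg_natCast M ?_,
        gammaPoleOrder_eq_zero_of_eq_half_odd (-(t + 2 * M + 1)) ?_] <;>
        push_cast [ofReal_rho] <;> ring
    · rw [cfunOrder, gammaPoleOrder_eq_one_of_eq_neg_natCast M ?_,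
        gammaPoleOrder_eq_zero_of_eq_half_odd (-M - 1) ?_,
        gammaPoleOrder_eq_zero_of_eq_half_odd (-(t + 2 * M + 2)) ?_] <;>
        push_cast [ofReal_rho] <;> ring
  · rw [cfunOrder, gammaPoleOrder_eq_one_of_eq_neg_natCast (t + k) ?_,
      gammaPoleOrder_eq_one_of_eq_neg_natCast k ?_,
      gammaPoleOrder_eq_one_of_eq_neg_natCast (n + 2 * t + 1 + 2 * k) ?_] <;>
      push_cast [ofReal_rho] <;> ring

theorem cfunOrder_nonpos {m₁ m₂ j : ℕ} (hj : (m₂ = 0 ∧ j = 1) ∨ (Even m₁ ∧ j = 2)) {z : ℂ}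
    (hz : ∀ k : ℕ, z ≠ -(rho m₁ m₂ + j * k)) : cfunOrder m₁ m₂ z ≤ 0 := by
  suffices gammaPoleOrder (((m₁ : ℂ) / 2 + 1 + z) / 2) ≤ gammaPoleOrder z ∧
      gammaPoleOrder (((m₁ : ℂ) / 2 + m₂ + z) / 2) = 0 by
    unfold cfunOrder
    omega
  rcases hj with ⟨rfl, rfl⟩ | ⟨⟨n, rfl⟩, rfl⟩
  · refine ⟨gammaPoleOrder_le fun M hM => ?_, gammaPoleOrder_eq_zero_of_forall_ne fun M hM => ?_⟩
    · exact (hz (2 * M + 1) (by push_cast [ofReal_rho]; linear_combination 2 * hM)).elim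
    · exact hz (2 * M) (by push_cast [ofReal_rho]; linear_combination 2 * hM)
  · refine ⟨gammaPoleOrder_le fun M hM => ⟨n + 1 + 2 * M, ?_⟩,
      gammaPoleOrder_eq_zero_of_forall_ne fun M hM => ?_⟩
    · push_cast at hM ⊢
      linear_combination 2 * hM
    · exact hz M (by push_cast [ofReal_rho] at hM ⊢; linear_combination 2 * hM)

theorem cfun_zeros (m₁ m₂ : ℕ) (hm₁ : 1 ≤ m₁) (j : ℕ)
    (hcase : (m₂ = 0 ∧ Odd m₁ ∧ j = 1) ∨ (Even m₁ ∧ Odd m₂ ∧ j = 2)) :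
    (∀ lam₀ : ℂ,
      Filter.Tendsto (cfun m₁ m₂) (nhdsWithin lam₀ {lam₀}ᶜ) (nhds 0)
        ↔ ∃ k : ℕ, lam₀ = -((rho m₁ m₂ : ℂ) + (j : ℂ) * (k : ℂ))) ∧
    ∀ k : ℕ, ∃ L : ℂ, L ≠ 0 ∧
      Filter.Tendsto
        (fun lam : ℂ =>
          cfun m₁ m₂ lam / (lam - (-((rho m₁ m₂ : ℂ) + (j : ℂ) * (k : ℂ)))))
        (nhdsWithin (-((rho m₁ m₂ : ℂ) + (j : ℂ) * (k : ℂ)))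
          {(-((rho m₁ m₂ : ℂ) + (j : ℂ) * (k : ℂ)))}ᶜ) (nhds L) := by
  have hρ : gfun m₁ m₂ (rho m₁ m₂) ≠ 0 := by
    refine gfun_ne_zero m₁ m₂ ?_
    rw [ofReal_re, rho]
    positivity
  have hord := meromorphicOrderAt_cfun m₁ m₂ hρ
  refine ⟨fun lam₀ => ?_, fun k => ?_⟩
  · rw [tendsto_zero_iff_meromorphicOrderAt_pos (meromorphicAt_cfun m₁ m₂ lam₀), hord,
      WithTop.coe_pos]
    refine ⟨fun hpos => ?_, ?_⟩
    · have hj : (m₂ = 0 ∧ j = 1) ∨ (Even m₁ ∧ j = 2) := by tauto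
      by_contra! hz
      exact (cfunOrder_nonpos hj hz).not_gt hpos
    · rintro ⟨k, rfl⟩
      rw [cfunOrder_neg_rho_sub hcase k]
      exact one_pos
  · refine exists_tendsto_div_sub_of_meromorphicOrderAt_eq_one (meromorphicAt_cfun m₁ m₂ _) ?_
    rw [hord, cfunOrder_neg_rho_sub hcase k]
    rfl

end
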